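/- Counterexample showing the first-coordinate-fixing assumption is essential: let X = {−1,1}, π uniform, P₀(x,·) = δ_x, Q₀(x,·) = επ + (1−ε)δ_{−x} for ε ∈ (0,1), P₁(x,·) = π, Q₁ = Q₀. Then P₁ ⪰₁ P₀ and Q₁ ⪰₁ Q₀, yet for f the identity, v(f, P₀Q₀) = ε/(2−ε) < 1 = v(f, P₁Q₁). -/

import Mathlib

/-! For `f = id` both composite operators act on `f` by a scalar `r`: `P₀Q₀ f = (ε - 1) f` and
`P₁Q₁ f = 0`. As `f` has mean `0` and variance `1` under `π`, the lag-`k` autocovariance is `r ^ k`,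
so `Var (∑_{k<n} f(Z_k)) = ∑_{i,j<n} r ^ |i - j| = n (1 + r) / (1 - r) + O(1)` and
`v(f, ·) = (1 + r) / (1 - r)`, which is `ε / (2 - ε)` for `r = ε - 1` and `1` for `r = 0`.
`P₁ ⪰₁ P₀` is `(π g)² ≤ π (g²)`, and `Q₁ ⪰₁ Q₀` holds trivially as `Q₁ = Q₀`. -/

open MeasureTheory Filter
open scoped ENNReal Topology

/-- Action of a plain-function kernel on functions. -/
noncomputable def actF {X : Type*} [MeasurableSpace X] (κ : X → Measure X) (f : X → ℝ) :
    X → ℝ := fun x => ∫ y, f y ∂(κ x)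

/-- `covH π T f k = Cov(f(Z₀), f(Z_k))` for the stationary homogeneous chain with
one-step operator `T`, started from `Z₀ ∼ π`. -/
noncomputable def covH {X : Type*} [MeasurableSpace X] (π : Measure X)
    (T : (X → ℝ) → X → ℝ) (f : X → ℝ) (k : ℕ) : ℝ :=
  (∫ x, f x * T^[k] f x ∂π) - (∫ x, f x ∂π) ^ 2

/-- `varH π T f n = Var(∑_{k=0}^{n-1} f(Z_k))` for the stationary homogeneous chain. -/
noncomputable def varH {X : Type*} [MeasurableSpace X] (π : Measure X)
    (T : (X → ℝ) → X → ℝ) (f : X → ℝ) (n : ℕ) : ℝ :=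
  ∑ i ∈ Finset.range n, ∑ j ∈ Finset.range n, covH π T f (max i j - min i j)

/-- The uniform distribution on `{-1, 1} ⊆ ℤ`. -/
noncomputable def pi16 : Measure ℤ := (2 : ℝ≥0∞)⁻¹ • (Measure.dirac 1 + Measure.dirac (-1))

/-- `P₀(x,·) = δ_x`. -/
noncomputable def P0k : ℤ → Measure ℤ := fun x => Measure.dirac x

/-- `P₁(x,·) = π`. -/
noncomputable def P1k : ℤ → Measure ℤ := fun _ => pi16

/-- `Q₀(x,·) = Q₁(x,·) = ε π + (1-ε) δ_{-x}`. -/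
noncomputable def Qk (ε : ℝ) : ℤ → Measure ℤ :=
  fun x => ENNReal.ofReal ε • pi16 + ENNReal.ofReal (1 - ε) • Measure.dirac (-x)

lemma sum_range_sum_range_pow_dist {r : ℝ} (hr : r ≠ 1) (n : ℕ) :
    ∑ i ∈ Finset.range n, ∑ j ∈ Finset.range n, r ^ (max i j - min i j) =
      n * (1 + r) / (1 - r) - 2 * r * (1 - r ^ n) / (1 - r) ^ 2 := by
  have hr' : 1 - r ≠ 0 := sub_ne_zero.mpr hr.symm
  induction n with
  | zero => simp
  | succ n ih =>
    have hrow : ∀ i ∈ Finset.range n, r ^ (max i n - min i n) = r * r ^ (n - 1 - i) := by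
      intro i hi
      rw [Finset.mem_range] at hi
      rw [← pow_succ']
      congr 1
      omega
    have hcol : ∀ j ∈ Finset.range n, r ^ (max n j - min n j) = r * r ^ (n - 1 - j) := by
      intro j hj
      rw [max_comm, min_comm]
      exact hrow j hj
    have hgeom : ∑ i ∈ Finset.range n, r ^ (n - 1 - i) = (1 - r ^ n) / (1 - r) := by
      rw [Finset.sum_range_reflect (fun i => r ^ i) n, geom_sum_eq hr, ← neg_div_neg_eq]
      ring_nf
    simp only [Finset.sum_range_succ, Finset.sum_add_distrib]
    rw [ih, Finset.sum_congr rfl hrow, Finset.sum_congr rfl hcol, ← Finset.mul_sum, hgeom]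
    simp only [max_self, min_self, Nat.sub_self, pow_zero]
    push_cast
    field_simp
    ring

lemma tendsto_sum_range_sum_range_pow_dist_div {r : ℝ} (hr : |r| < 1) :
    Tendsto (fun n : ℕ =>
        (∑ i ∈ Finset.range n, ∑ j ∈ Finset.range n, r ^ (max i j - min i j)) / n)
      atTop (𝓝 ((1 + r) / (1 - r))) := by
  have hr1 : r ≠ 1 := fun h => by simp [h] at hr
  have herror : Tendsto (fun n : ℕ => 2 * r * (1 - r ^ n) / (1 - r) ^ 2 * (1 / n))
      atTop (𝓝 (2 * r * (1 - 0) / (1 - r) ^ 2 * 0)) :=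
    ((((tendsto_pow_atTop_nhds_zero_of_abs_lt_one hr).const_sub 1).const_mul _).div_const
      _).mul tendsto_one_div_atTop_nhds_zero_nat
  rw [mul_zero] at herror
  have hclosed : ∀ᶠ n : ℕ in atTop,
      (1 + r) / (1 - r) - 2 * r * (1 - r ^ n) / (1 - r) ^ 2 * (1 / n) =
        (∑ i ∈ Finset.range n, ∑ j ∈ Finset.range n, r ^ (max i j - min i j)) / n := by
    filter_upwards [eventually_ne_atTop 0] with n hn
    rw [sum_range_sum_range_pow_dist hr1]
    field_simp
  simpa only [sub_zero] using (tendsto_const_nhds.sub herror).congr' hclosed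

section StationaryChain

variable {X : Type*} {T : (X → ℝ) → X → ℝ} {f : X → ℝ} {r : ℝ}

lemma iterate_eq_pow_smul_of_map_smul (hT : ∀ c : ℝ, T (c • f) = (c * r) • f) (k : ℕ) :
    T^[k] f = r ^ k • f := by
  induction k with
  | zero => simp
  | succ k ih => rw [Function.iterate_succ_apply', ih, hT, pow_succ]

variable [MeasurableSpace X] {π : Measure X}

lemma covH_eq_pow_of_map_smul (hT : ∀ c : ℝ, T (c • f) = (c * r) • f)
    (hmean : ∫ x, f x ∂π = 0) (hsq : ∫ x, f x ^ 2 ∂π = 1) (k : ℕ) :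
    covH π T f k = r ^ k := by
  simp_rw [covH, iterate_eq_pow_smul_of_map_smul hT, Pi.smul_apply, smul_eq_mul,
    mul_left_comm (f _), ← sq, integral_const_mul, hsq, hmean]
  ring

lemma tendsto_varH_div_of_map_smul (hT : ∀ c : ℝ, T (c • f) = (c * r) • f)
    (hmean : ∫ x, f x ∂π = 0) (hsq : ∫ x, f x ^ 2 ∂π = 1) (hr : |r| < 1) :
    Tendsto (fun n : ℕ => varH π T f n / n) atTop (𝓝 ((1 + r) / (1 - r))) := by
  simpa only [varH, covH_eq_pow_of_map_smul hT hmean hsq] using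
    tendsto_sum_range_sum_range_pow_dist_div hr

end StationaryChain

lemma integral_pi16 (f : ℤ → ℝ) : ∫ x, f x ∂pi16 = (f 1 + f (-1)) / 2 := by
  rw [pi16, integral_smul_measure, integral_add_measure (integrable_dirac (by simp))
    (integrable_dirac (by simp)), integral_dirac, integral_dirac]
  simp only [ENNReal.toReal_inv, ENNReal.toReal_ofNat, smul_eq_mul]
  ring

lemma integrable_pi16 (f : ℤ → ℝ) : Integrable f pi16 :=
  ((integrable_dirac (by simp)).add_measure (integrable_dirac (by simp))).smul_measure (by simp)

lemma integral_intCast_pi16 : ∫ x, (x : ℝ) ∂pi16 = 0 := by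
  rw [integral_pi16]
  norm_num

lemma integral_intCast_sq_pi16 : ∫ x, (x : ℝ) ^ 2 ∂pi16 = 1 := by
  rw [integral_pi16]
  norm_num

lemma actF_P0k (g : ℤ → ℝ) : actF P0k g = g :=
  funext fun x => integral_dirac g x

lemma actF_P1k (g : ℤ → ℝ) (x : ℤ) : actF P1k g x = (g 1 + g (-1)) / 2 :=
  integral_pi16 g

lemma actF_Qk {ε : ℝ} (hε0 : 0 ≤ ε) (hε1 : ε ≤ 1) (g : ℤ → ℝ) (x : ℤ) :
    actF (Qk ε) g x = ε * ((g 1 + g (-1)) / 2) + (1 - ε) * g (-x) := by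
  rw [actF, Qk, integral_add_measure ((integrable_pi16 g).smul_measure ENNReal.ofReal_ne_top)
      ((integrable_dirac (by simp)).smul_measure ENNReal.ofReal_ne_top),
    integral_smul_measure, integral_smul_measure, integral_dirac, integral_pi16,
    ENNReal.toReal_ofReal hε0, ENNReal.toReal_ofReal (sub_nonneg.mpr hε1), smul_eq_mul,
    smul_eq_mul]

lemma actF_Qk_smul_intCast {ε : ℝ} (hε0 : 0 ≤ ε) (hε1 : ε ≤ 1) (c : ℝ) :
    actF (Qk ε) (c • ((↑) : ℤ → ℝ)) = (c * (ε - 1)) • ((↑) : ℤ → ℝ) := by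
  funext x
  simp only [actF_Qk hε0 hε1, Pi.smul_apply, smul_eq_mul]
  push_cast
  ring

lemma actF_P1k_smul_intCast (c : ℝ) : actF P1k (c • ((↑) : ℤ → ℝ)) = 0 := by
  funext x
  simp only [actF_P1k, Pi.smul_apply, smul_eq_mul, Pi.zero_apply]
  push_cast
  ring

lemma integral_mul_actF_P1k_le (g : ℤ → ℝ) :
    ∫ x, g x * actF P1k g x ∂pi16 ≤ ∫ x, g x * actF P0k g x ∂pi16 := by
  simp only [integral_pi16, actF_P1k, actF_P0k]
  nlinarith [sq_nonneg (g 1 - g (-1))]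

/-- Counterexample (Remark 18): on `{-1,1}` with `π` uniform, `P₀ = id`,
`Q₀ = Q₁ = επ + (1-ε)δ_{-x}`, `P₁(x,·) = π`, the covariance orderings `P₁ ⪰₁ P₀`,
`Q₁ ⪰₁ Q₀` hold, yet for `f = id`, `v(f, P₀Q₀) = ε/(2-ε) < 1 = v(f, P₁Q₁)`: the
first-coordinate-fixing assumption of Lemma 17 is essential. -/
theorem stmt16 (ε : ℝ) (hε0 : 0 < ε) (hε1 : ε < 1) :
    (∀ g : ℤ → ℝ, MemLp g 2 pi16 →
      ∫ x, g x * actF P1k g x ∂pi16 ≤ ∫ x, g x * actF P0k g x ∂pi16) ∧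
    (∀ g : ℤ → ℝ, MemLp g 2 pi16 →
      ∫ x, g x * actF (Qk ε) g x ∂pi16 ≤ ∫ x, g x * actF (Qk ε) g x ∂pi16) ∧
    Tendsto (fun n : ℕ =>
        varH pi16 (fun g => actF P0k (actF (Qk ε) g)) (fun x : ℤ => (x : ℝ)) n / n)
      atTop (𝓝 (ε / (2 - ε))) ∧
    Tendsto (fun n : ℕ =>
        varH pi16 (fun g => actF P1k (actF (Qk ε) g)) (fun x : ℤ => (x : ℝ)) n / n)
      atTop (𝓝 1) ∧
    ε / (2 - ε) < 1 := by
  have hQ := actF_Qk_smul_intCast hε0.le hε1.le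
  have hr : |ε - 1| < 1 := abs_lt.mpr ⟨by linarith, by linarith⟩
  have hP0Q : ∀ c : ℝ, actF P0k (actF (Qk ε) (c • ((↑) : ℤ → ℝ))) =
      (c * (ε - 1)) • ((↑) : ℤ → ℝ) := fun c => by rw [hQ, actF_P0k]
  have hP1Q : ∀ c : ℝ, actF P1k (actF (Qk ε) (c • ((↑) : ℤ → ℝ))) = (c * 0) • ((↑) : ℤ → ℝ) :=
    fun c => by rw [hQ, actF_P1k_smul_intCast, mul_zero, zero_smul]
  refine ⟨fun g _ => integral_mul_actF_P1k_le g, fun g _ => le_rfl, ?_, ?_,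
    (div_lt_one (by linarith)).mpr (by linarith)⟩
  · convert tendsto_varH_div_of_map_smul (T := fun g => actF P0k (actF (Qk ε) g)) hP0Q
      integral_intCast_pi16 integral_intCast_sq_pi16 hr using 2
    ring
  · simpa using tendsto_varH_div_of_map_smul (T := fun g => actF P1k (actF (Qk ε) g)) hP1Q
      integral_intCast_pi16 integral_intCast_sq_pi16 (by simp)
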